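/- arXiv:2209.10866 — 2 statements merged into one kernel-verified Lean document; each statement's English description precedes it below -/
import Mathlib

section
/- Suppose a dataset {a_i}_{i∈[m]} ⊂ ℝ^d with a disjoint clustering {C_k}_{k∈[K]} and cluster means μ_k satisfies the separability condition α·max_{i∈C_k,k∈[K]}‖μ_k − a_i‖ < min_{l≠k}‖μ_k − μ_l‖ with α = 4(m − |C_{(K)}|)/|C_{(K)}|, where |C_{(K)}| is the size of the smallest cluster. Then the interval [max_{k} max_{i,j∈C_k}‖a_i − a_j‖/|C_k| , min_{k≠l}‖μ_k − μ_l‖/(2m − |C_k| − |C_l|)) is nonempty, i.e., max_k max_{i,j∈C_k}‖a_i − a_j‖/|C_k| < min_{k≠l}‖μ_k − μ_l‖/(2m − |C_k| − |C_l|). -/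
open Finset

/-- Separability with α = 4(m − |C_(K)|)/|C_(K)| implies the convex-clustering interval is
nonempty: every pairwise within-cluster distance over cluster size is strictly smaller than
every normalized between-cluster mean distance. -/
theorem stmt_2 {d m K : ℕ} (hK : 2 ≤ K)
    (a : Fin m → EuclideanSpace ℝ (Fin d))
    (Cl : Fin K → Finset (Fin m))
    (hpart : ∀ i : Fin m, ∃! k : Fin K, i ∈ Cl k)
    (hne : ∀ k, (Cl k).Nonempty)
    (μ : Fin K → EuclideanSpace ℝ (Fin d))
    (hμ : ∀ k, μ k = ((Cl k).card : ℝ)⁻¹ • ∑ i ∈ Cl k, a i)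
    (smin : ℕ)
    (hlb : ∀ k, smin ≤ (Cl k).card)
    (hmin : ∃ k, (Cl k).card = smin)
    (hsep : ∀ k : Fin K, ∀ i ∈ Cl k, ∀ k' l' : Fin K, k' ≠ l' →
      (4 * ((m : ℝ) - (smin : ℝ)) / (smin : ℝ)) * ‖μ k - a i‖ < ‖μ k' - μ l'‖) :
    ∀ k : Fin K, ∀ i ∈ Cl k, ∀ j ∈ Cl k, ∀ k' l' : Fin K, k' ≠ l' →
      ‖a i - a j‖ / ((Cl k).card : ℝ) <
        ‖μ k' - μ l'‖ / (2 * (m : ℝ) - ((Cl k').card : ℝ) - ((Cl l').card : ℝ)) := by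
  intro k i hi j hj k' l' hkl
  -- disjointness
  have hdisj : ∀ p q : Fin K, p ≠ q → Disjoint (Cl p) (Cl q) := by
    intro p q hpq
    rw [Finset.disjoint_left]
    intro x hxp hxq
    obtain ⟨c, _, hc⟩ := hpart x
    exact hpq ((hc p hxp).trans (hc q hxq).symm)
  have hcard : (Cl k').card + (Cl l').card ≤ m := by
    have h1 : (Cl k' ∪ Cl l').card = (Cl k').card + (Cl l').card :=
      Finset.card_union_of_disjoint (hdisj k' l' hkl)
    calc (Cl k').card + (Cl l').card = (Cl k' ∪ Cl l').card := h1.symm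
      _ ≤ (Finset.univ : Finset (Fin m)).card := Finset.card_le_card (Finset.subset_univ _)
      _ = m := Finset.card_fin m
  have hs1 : 1 ≤ smin := by
    obtain ⟨k0, hk0⟩ := hmin
    exact hk0 ▸ Finset.card_pos.mpr (hne k0)
  -- real abbreviations
  set S : ℝ := (smin : ℝ) with hS
  set M : ℝ := (m : ℝ) with hM
  have hSpos : (0:ℝ) < S := by rw [hS]; exact_mod_cast hs1
  have hck' : S ≤ ((Cl k').card : ℝ) := by rw [hS]; exact_mod_cast hlb k'
  have hcl' : S ≤ ((Cl l').card : ℝ) := by rw [hS]; exact_mod_cast hlb l'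
  have hck : S ≤ ((Cl k).card : ℝ) := by rw [hS]; exact_mod_cast hlb k
  have hsum : ((Cl k').card : ℝ) + ((Cl l').card : ℝ) ≤ M := by rw [hM]; exact_mod_cast hcard
  have hM2S : 2 * S ≤ M := by linarith
  set D : ℝ := ‖μ k' - μ l'‖ with hD
  have hA := hsep k i hi k' l' hkl
  have hB := hsep k j hj k' l' hkl
  set A : ℝ := ‖μ k - a i‖
  set B : ℝ := ‖μ k - a j‖
  have hAnn : 0 ≤ A := norm_nonneg _
  have hBnn : 0 ≤ B := norm_nonneg _
  have hA' : 4 * (M - S) * A < D * S := by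
    rw [div_mul_eq_mul_div, div_lt_iff₀ hSpos] at hA
    linarith
  have hB' : 4 * (M - S) * B < D * S := by
    rw [div_mul_eq_mul_div, div_lt_iff₀ hSpos] at hB
    linarith
  have hDpos : 0 < D := by
    have : 0 ≤ 4 * (M - S) / S * A := by
      exact mul_nonneg (div_nonneg (by linarith) hSpos.le) hAnn
    linarith
  have hab : ‖a i - a j‖ ≤ A + B := by
    have : a i - a j = (μ k - a j) - (μ k - a i) := by abel
    rw [this]
    calc ‖(μ k - a j) - (μ k - a i)‖ ≤ ‖μ k - a j‖ + ‖μ k - a i‖ := norm_sub_le _ _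
      _ = A + B := by ring
  have habnn : 0 ≤ ‖a i - a j‖ := norm_nonneg _
  rw [div_lt_div_iff₀ (by linarith) (by linarith)]
  nlinarith [mul_le_mul_of_nonneg_right hab (by linarith : (0:ℝ) ≤ 2 * (M - S)),
    mul_le_mul_of_nonneg_left hck hDpos.le,
    mul_le_mul_of_nonneg_left (show 2 * M - ((Cl k').card : ℝ) - ((Cl l').card : ℝ) ≤ 2 * (M - S) by linarith) habnn]
end

section
/- Suppose a dataset in ℝ^d with clustering {C_k} satisfies the separability condition α·max_{i∈C_k,k∈[K]}‖μ_k − a_i‖ < min_{l≠k}‖μ_k − μ_l‖ with α = 2c√m/√|C_{(K)}| for some c > 0. Then the center separation condition holds: for all k ≠ l, ‖μ_k − μ_l‖ > c(Δ_k + Δ_l), where Δ_k = (1/√|C_k|)·min{√K‖A−C‖, ‖A−C‖_F}. -/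
open Finset

/-- Separability with α = 2c√m/√|C_(K)| implies the center separation condition
‖μ_k − μ_l‖ > c(Δ_k + Δ_l) for all k ≠ l. -/
theorem stmt_7 {d m K : ℕ} (hm : 0 < m)
    (a : Fin m → EuclideanSpace ℝ (Fin d))
    (cl : Fin m → Fin K)
    (Cl : Fin K → Finset (Fin m))
    (hCl : ∀ k, Cl k = Finset.univ.filter (fun i => cl i = k))
    (hne : ∀ k, (Cl k).Nonempty)
    (μ : Fin K → EuclideanSpace ℝ (Fin d))
    (hμ : ∀ k, μ k = ((Cl k).card : ℝ)⁻¹ • ∑ i ∈ Cl k, a i)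
    (s : ℝ)
    (hs : s ≤ Real.sqrt (∑ i : Fin m, ‖a i - μ (cl i)‖ ^ 2))
    (smin : ℕ)
    (hlb : ∀ k, smin ≤ (Cl k).card)
    (hminex : ∃ k, (Cl k).card = smin)
    (c : ℝ) (hc : 0 < c)
    (hsep : ∀ k : Fin K, ∀ i ∈ Cl k, ∀ k' l' : Fin K, k' ≠ l' →
      (2 * c * Real.sqrt m / Real.sqrt (smin : ℝ)) * ‖μ k - a i‖ < ‖μ k' - μ l'‖) :
    ∀ k l : Fin K, k ≠ l →
      c * ((Real.sqrt ((Cl k).card : ℝ))⁻¹ *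
            min (Real.sqrt K * s) (Real.sqrt (∑ i : Fin m, ‖a i - μ (cl i)‖ ^ 2)) +
          (Real.sqrt ((Cl l).card : ℝ))⁻¹ *
            min (Real.sqrt K * s) (Real.sqrt (∑ i : Fin m, ‖a i - μ (cl i)‖ ^ 2))) <
        ‖μ k - μ l‖ := by
  intro k l hkl
  set F := Real.sqrt (∑ i : Fin m, ‖a i - μ (cl i)‖ ^ 2) with hFdef
  have hF0 : 0 ≤ F := Real.sqrt_nonneg _
  obtain ⟨i₀, -, hi₀⟩ := Finset.exists_max_image (Finset.univ : Finset (Fin m))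
    (fun i => ‖μ (cl i) - a i‖) ⟨⟨0, hm⟩, Finset.mem_univ _⟩
  set M := ‖μ (cl i₀) - a i₀‖ with hMdef
  have hM0 : 0 ≤ M := norm_nonneg _
  have hFle : F ≤ Real.sqrt m * M := by
    have h1 : (∑ i : Fin m, ‖a i - μ (cl i)‖ ^ 2) ≤ (m : ℝ) * M ^ 2 := by
      calc ∑ i : Fin m, ‖a i - μ (cl i)‖ ^ 2 ≤ ∑ _i : Fin m, M ^ 2 := by
            apply Finset.sum_le_sum
            intro i _
            rw [norm_sub_rev]
            exact pow_le_pow_left₀ (norm_nonneg _) (hi₀ i (Finset.mem_univ _)) 2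
        _ = (m : ℝ) * M ^ 2 := by simp [mul_comm]
    calc F ≤ Real.sqrt ((m : ℝ) * M ^ 2) := Real.sqrt_le_sqrt h1
      _ = Real.sqrt m * M := by
          rw [Real.sqrt_mul (Nat.cast_nonneg m), Real.sqrt_sq hM0]
  obtain ⟨k0, hk0⟩ := hminex
  have hsmin : 0 < smin := hk0 ▸ Finset.card_pos.mpr (hne k0)
  have hsq : 0 < Real.sqrt (smin : ℝ) := Real.sqrt_pos.mpr (by exact_mod_cast hsmin)
  have hterm : ∀ j : Fin K, (Real.sqrt ((Cl j).card : ℝ))⁻¹ * min (Real.sqrt K * s) F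
      ≤ (Real.sqrt (smin : ℝ))⁻¹ * (Real.sqrt m * M) := by
    intro j
    have h1 : min (Real.sqrt K * s) F ≤ Real.sqrt m * M := (min_le_right _ _).trans hFle
    have hinv : (Real.sqrt ((Cl j).card : ℝ))⁻¹ ≤ (Real.sqrt (smin : ℝ))⁻¹ := by
      apply inv_anti₀ hsq
      exact Real.sqrt_le_sqrt (by exact_mod_cast hlb j)
    calc (Real.sqrt ((Cl j).card : ℝ))⁻¹ * min (Real.sqrt K * s) F
        ≤ (Real.sqrt ((Cl j).card : ℝ))⁻¹ * (Real.sqrt m * M) :=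
          mul_le_mul_of_nonneg_left h1 (inv_nonneg.mpr (Real.sqrt_nonneg _))
      _ ≤ (Real.sqrt (smin : ℝ))⁻¹ * (Real.sqrt m * M) :=
          mul_le_mul_of_nonneg_right hinv (mul_nonneg (Real.sqrt_nonneg _) hM0)
  have hkey : 2 * c * Real.sqrt m / Real.sqrt (smin : ℝ) * M < ‖μ k - μ l‖ := by
    apply hsep (cl i₀) i₀ _ k l hkl
    rw [hCl]
    simp
  refine lt_of_le_of_lt ?_ hkey
  have h2 : c * ((Real.sqrt ((Cl k).card : ℝ))⁻¹ * min (Real.sqrt K * s) F +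
      (Real.sqrt ((Cl l).card : ℝ))⁻¹ * min (Real.sqrt K * s) F)
      ≤ c * ((Real.sqrt (smin : ℝ))⁻¹ * (Real.sqrt m * M) +
        (Real.sqrt (smin : ℝ))⁻¹ * (Real.sqrt m * M)) :=
    mul_le_mul_of_nonneg_left (add_le_add (hterm k) (hterm l)) hc.le
  refine h2.trans (le_of_eq ?_)
  field_simp
  ring
end
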